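/- arXiv:2003.01818 — 3 statements merged into one kernel-verified Lean document; each statement's English description precedes it below -/
import Mathlib

section
/- Every OAT graph G satisfies χ(G) = ω(G). -/
/-- The disjoint union of two simple graphs. -/
def dUnion {V W : Type} (G : SimpleGraph V) (H : SimpleGraph W) : SimpleGraph (V ⊕ W) :=
  SimpleGraph.fromRel (fun a b =>
    (∃ x y, a = Sum.inl x ∧ b = Sum.inl y ∧ G.Adj x y) ∨
    (∃ x y, a = Sum.inr x ∧ b = Sum.inr y ∧ H.Adj x y))

/-- The join of two simple graphs: all edges between the two sides are added. -/
def joinG {V W : Type} (G : SimpleGraph V) (H : SimpleGraph W) : SimpleGraph (V ⊕ W) :=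
  SimpleGraph.fromRel (fun a b =>
    (∃ x y, a = Sum.inl x ∧ b = Sum.inl y ∧ G.Adj x y) ∨
    (∃ x y, a = Sum.inr x ∧ b = Sum.inr y ∧ H.Adj x y) ∨
    (∃ x y, a = Sum.inl x ∧ b = Sum.inr y))

/-- Adding a new vertex (`none`) whose neighbourhood is the set `X`. When
`X ⊆ N(v)` this is the operation of adding a vertex comparable to `v`. -/
def addComparable {V : Type} (G : SimpleGraph V) (X : Set V) : SimpleGraph (Option V) :=
  SimpleGraph.fromRel (fun a b =>
    (∃ x y, a = some x ∧ b = some y ∧ G.Adj x y) ∨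
    (∃ x, a = none ∧ b = some x ∧ x ∈ X))

/-- Attaching a complete graph on `q` vertices to the vertex `v`: every new
vertex is adjacent to `v` and to every other new vertex. -/
def attachClique {V : Type} (G : SimpleGraph V) (v : V) (q : ℕ) : SimpleGraph (V ⊕ Fin q) :=
  SimpleGraph.fromRel (fun a b =>
    (∃ x y, a = Sum.inl x ∧ b = Sum.inl y ∧ G.Adj x y) ∨
    (∃ i j, a = Sum.inr i ∧ b = Sum.inr j) ∨
    (∃ i, a = Sum.inl v ∧ b = Sum.inr i))

/-- OAT graphs: graphs constructible from single vertices by disjoint union,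
join, adding a comparable vertex, and attaching a clique to a vertex
(up to isomorphism). -/
inductive IsOAT : {V : Type} → SimpleGraph V → Prop
  | single : IsOAT (⊥ : SimpleGraph (Fin 1))
  | dunion {V W : Type} {G : SimpleGraph V} {H : SimpleGraph W} :
      IsOAT G → IsOAT H → IsOAT (dUnion G H)
  | join {V W : Type} {G : SimpleGraph V} {H : SimpleGraph W} :
      IsOAT G → IsOAT H → IsOAT (joinG G H)
  | comparable {V : Type} {G : SimpleGraph V} (v : V) (X : Set V)
      (hX : X ⊆ G.neighborSet v) : IsOAT G → IsOAT (addComparable G X)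
  | clique {V : Type} {G : SimpleGraph V} (v : V) (q : ℕ) (hq : 1 ≤ q) :
      IsOAT G → IsOAT (attachClique G v q)
  | iso {V W : Type} {G : SimpleGraph V} {H : SimpleGraph W} :
      IsOAT G → G ≃g H → IsOAT H

/-!
Each OAT operation preserves `ω`-colourability. Parts of a disjoint union are coloured
independently. A join is coloured with disjoint palettes, and its clique number is at least the
sum, since the union of two maximum cliques is a clique. A vertex `u` comparable to `v` takes the
colour of `v`, which `N(u) ⊆ N(v)` avoids. An attached clique `Q` only sees `v`, so it takes
`|Q|` colours distinct from that of `v`; these exist because `Q + v` is a clique. Together with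
`ω ≤ χ`, which always holds, this gives `χ = ω`.
-/

namespace SimpleGraph

variable {α β : Type*} {G : SimpleGraph α} {H : SimpleGraph β}

@[simp] lemma ne_and_adj_or_adj_iff {x y : α} :
    x ≠ y ∧ (G.Adj x y ∨ G.Adj y x) ↔ G.Adj x y := by
  rw [G.adj_comm y x, or_self, and_iff_right_of_imp Adj.ne]

lemma IsNClique.le_cliqueNum [Finite α] {n : ℕ} {s : Finset α} (h : G.IsNClique n s) :
    n ≤ G.cliqueNum :=
  h.card_eq ▸ h.isClique.card_le_cliqueNum

lemma Embedding.cliqueNum_le [Finite β] (f : G ↪g H) : G.cliqueNum ≤ H.cliqueNum := by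
  obtain ⟨s, hs⟩ := G.exists_isNClique_cliqueNum
  have hmap : G.map f.toEmbedding ≤ H := (map_le_iff_le_comap _ _ _).2 f.toHom.le_comap
  exact ((hs.map (f := f.toEmbedding)).mono hmap).le_cliqueNum

end SimpleGraph

open SimpleGraph

section Adjacency

variable {V W : Type} {G : SimpleGraph V} {H : SimpleGraph W}

lemma dUnion_eq_sum : dUnion G H = G ⊕g H := by
  ext (x | x) (y | y) <;> simp [dUnion]

@[simp] lemma joinG_adj_inl_inl {x y : V} : (joinG G H).Adj (.inl x) (.inl y) ↔ G.Adj x y := by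
  simp [joinG]

@[simp] lemma joinG_adj_inr_inr {x y : W} : (joinG G H).Adj (.inr x) (.inr y) ↔ H.Adj x y := by
  simp [joinG]

@[simp] lemma joinG_adj_inl_inr {x : V} {y : W} : (joinG G H).Adj (.inl x) (.inr y) := by
  simp [joinG]

@[simp] lemma joinG_adj_inr_inl {x : V} {y : W} : (joinG G H).Adj (.inr y) (.inl x) := by
  simp [joinG]

@[simp] lemma addComparable_adj_some_some {X : Set V} {x y : V} :
    (addComparable G X).Adj (some x) (some y) ↔ G.Adj x y := by
  simp [addComparable]

@[simp] lemma addComparable_adj_none_some {X : Set V} {x : V} :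
    (addComparable G X).Adj none (some x) ↔ x ∈ X := by
  simp [addComparable]

@[simp] lemma addComparable_adj_some_none {X : Set V} {x : V} :
    (addComparable G X).Adj (some x) none ↔ x ∈ X := by
  simp [addComparable]

@[simp] lemma attachClique_adj_inl_inl {v : V} {q : ℕ} {x y : V} :
    (attachClique G v q).Adj (.inl x) (.inl y) ↔ G.Adj x y := by
  simp [attachClique]

@[simp] lemma attachClique_adj_inr_inr {v : V} {q : ℕ} {i j : Fin q} :
    (attachClique G v q).Adj (.inr i) (.inr j) ↔ i ≠ j := by
  simp [attachClique]

@[simp] lemma attachClique_adj_inl_inr {v : V} {q : ℕ} {x : V} {i : Fin q} :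
    (attachClique G v q).Adj (.inl x) (.inr i) ↔ x = v := by
  simp [attachClique]

@[simp] lemma attachClique_adj_inr_inl {v : V} {q : ℕ} {x : V} {i : Fin q} :
    (attachClique G v q).Adj (.inr i) (.inl x) ↔ x = v := by
  simp [attachClique]

end Adjacency

section Operations

variable {V W : Type} {G : SimpleGraph V} {H : SimpleGraph W}

lemma colorable_joinG {m n : ℕ} (hG : G.Colorable m) (hH : H.Colorable n) :
    (joinG G H).Colorable (m + n) := by
  obtain ⟨C₁⟩ := hG
  obtain ⟨C₂⟩ := hH
  let C : (joinG G H).Coloring (Fin m ⊕ Fin n) := Coloring.mk (Sum.map C₁ C₂) <| by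
    rintro (x | x) (y | y) hxy <;> simp_all [Coloring.valid]
  simpa using C.colorable

lemma colorable_addComparable {v : V} {X : Set V} {n : ℕ}
    (hX : X ⊆ G.neighborSet v) (hG : G.Colorable n) : (addComparable G X).Colorable n := by
  obtain ⟨C⟩ := hG
  refine ⟨Coloring.mk (fun a => a.elim (C v) C) ?_⟩
  rintro (_ | x) (_ | y) hxy
  · exact absurd hxy (SimpleGraph.irrefl _)
  · exact C.valid (hX (addComparable_adj_none_some.1 hxy))
  · exact (C.valid (hX (addComparable_adj_some_none.1 hxy))).symm
  · exact C.valid (addComparable_adj_some_some.1 hxy)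

lemma colorable_attachClique {v : V} {q n : ℕ} (hG : G.Colorable n) (hq : q < n) :
    (attachClique G v q).Colorable n := by
  obtain ⟨C⟩ := hG
  have hcard : Fintype.card (Fin q) ≤ Fintype.card {c : Fin n // c ≠ C v} := by
    simpa [Fintype.card_subtype_compl] using Nat.le_sub_one_of_lt hq
  obtain ⟨e⟩ := Function.Embedding.nonempty_of_card_le hcard
  refine ⟨Coloring.mk (Sum.elim C fun i => e i) ?_⟩
  rintro (x | i) (y | j) hxy
  · exact C.valid (attachClique_adj_inl_inl.1 hxy)
  · obtain rfl := attachClique_adj_inl_inr.1 hxy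
    exact fun h => (e j).2 h.symm
  · obtain rfl := attachClique_adj_inr_inl.1 hxy
    exact (e i).2
  · exact fun h => attachClique_adj_inr_inr.1 hxy (e.injective (Subtype.ext h))

lemma cliqueNum_add_cliqueNum_le_joinG [Finite V] [Finite W] :
    G.cliqueNum + H.cliqueNum ≤ (joinG G H).cliqueNum := by
  obtain ⟨s, hs⟩ := G.exists_isNClique_cliqueNum
  obtain ⟨t, ht⟩ := H.exists_isNClique_cliqueNum
  have hclique : (joinG G H).IsNClique (G.cliqueNum + H.cliqueNum) (s.disjSum t) := by
    refine ⟨?_, by rw [Finset.card_disjSum, hs.card_eq, ht.card_eq]⟩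
    have hs' := hs.isClique
    have ht' := ht.isClique
    rintro (x | x) hx (y | y) hy hxy <;> simp_all [IsClique, Set.Pairwise]
  exact hclique.le_cliqueNum

lemma lt_cliqueNum_attachClique [Finite V] {v : V} {q : ℕ} :
    q < (attachClique G v q).cliqueNum := by
  have hclique : (attachClique G v q).IsNClique (q + 1) (({v} : Finset V).disjSum .univ) := by
    refine ⟨?_, by simp [Finset.card_disjSum, add_comm]⟩
    rintro (x | i) hx (y | j) hy hxy <;> simp_all
  exact hclique.le_cliqueNum

end Operations

lemma IsOAT.finite {V : Type} {G : SimpleGraph V} (h : IsOAT G) : Finite V := by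
  induction h with
  | iso _ e _ => exact Finite.of_equiv _ e.toEquiv
  | _ => infer_instance

lemma IsOAT.colorable_cliqueNum {V : Type} {G : SimpleGraph V} (h : IsOAT G) :
    G.Colorable G.cliqueNum := by
  induction h with
  | single =>
    have hω : 1 ≤ (⊥ : SimpleGraph (Fin 1)).cliqueNum :=
      (isNClique_one.2 ⟨0, rfl⟩).le_cliqueNum
    exact (show (⊥ : SimpleGraph (Fin 1)).Colorable 1 by simp).mono hω
  | dunion hG hH ihG ihH =>
    have := hG.finite
    have := hH.finite
    rw [dUnion_eq_sum]
    exact colorable_sum.2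
      ⟨ihG.mono Embedding.sumInl.cliqueNum_le, ihH.mono Embedding.sumInr.cliqueNum_le⟩
  | join hG hH ihG ihH =>
    have := hG.finite
    have := hH.finite
    exact (colorable_joinG ihG ihH).mono cliqueNum_add_cliqueNum_le_joinG
  | @comparable U G v X hX hG ih =>
    have := hG.finite
    let f : G ↪g addComparable G X := ⟨Function.Embedding.some, by simp⟩
    exact (colorable_addComparable hX ih).mono f.cliqueNum_le
  | @clique U G v q _ hG ih =>
    have := hG.finite
    let f : G ↪g attachClique G v q := ⟨Function.Embedding.inl, by simp⟩
    exact colorable_attachClique (ih.mono f.cliqueNum_le) lt_cliqueNum_attachClique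
  | iso hG e ih =>
    have := (IsOAT.iso hG e).finite
    exact (ih.mono e.toEmbedding.cliqueNum_le).of_hom e.symm.toHom

/-- Every OAT graph satisfies χ(G) = ω(G). -/
theorem stmt4 {V : Type} (G : SimpleGraph V) (h : IsOAT G) :
    G.chromaticNumber = (G.cliqueNum : ℕ∞) := by
  have := h.finite
  exact le_antisymm h.colorable_cliqueNum.chromaticNumber_le G.cliqueNum_le_chromaticNumber
end

section
/- (Renaming Lemma) Let α and β be two proper colourings of a finite graph G that induce the same partition of the vertices into k colour classes, using colours from a common set S with |S| > k. Then α can be transformed into β by a sequence of single-vertex recolourings, each intermediate colouring being a proper colouring of G with colours from S, such that each vertex is recoloured at most 2 times. -/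
/-!
Recolour whole colour classes, one vertex at a time, and always to a colour that no vertex
currently uses; the colouring then stays proper and keeps its partition. If some wrongly
coloured class finds its target colour unused, move it there. Otherwise every target colour is
in use, and since fewer than `|S|` colours are in use there is a spare colour `t ∈ S`, which is
then not a target colour. Some wrong class `P` carries the target colour of another wrong class
`Q`: moving `P` to `t` frees the target of `Q`. The induction, on the number of wrongly coloured
vertices, keeps a budget: a vertex whose colour is not a colour of `β` at all (such as `t`)
needs one more recolouring, any other wrong vertex at most two.
-/

open Finset

namespace Renaming

variable {V C : Type*}

theorem card_image_le_of_factorsThrough [DecidableEq C] {β γ : V → C} (h : β.FactorsThrough γ)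
    (s : Finset V) : #(s.image β) ≤ #(s.image γ) :=
  calc #(s.image β) = #((s.image γ).image (Function.extend γ β id)) := by
        rw [image_image, Function.comp_def]
        simp only [h.extend_apply]
    _ ≤ #(s.image γ) := card_image_le

def IsProperColouring (G : SimpleGraph V) (S : Finset C) (γ : V → C) : Prop :=
  (∀ u v, G.Adj u v → γ u ≠ γ v) ∧ ∀ v, γ v ∈ S

theorem IsProperColouring.ite_mem_of_isIndepSet [DecidableEq V] {G : SimpleGraph V}
    {S : Finset C} {γ : V → C} {t : C} {s : Finset V} (hγ : IsProperColouring G S γ)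
    (ht : t ∈ S) (hunused : ∀ u, γ u ≠ t) (hs : G.IsIndepSet s) :
    IsProperColouring G S (fun u => if u ∈ s then t else γ u) := by
  refine ⟨fun u v huv => ?_, fun v => ?_⟩
  · by_cases hu : u ∈ s <;> by_cases hv : v ∈ s <;> simp only [hu, hv, if_true, if_false]
    · exact absurd huv (hs hu hv (G.ne_of_adj huv))
    · exact (hunused v).symm
    · exact hunused u
    · exact hγ.1 u v huv
  · dsimp only
    split_ifs
    exacts [ht, hγ.2 v]

variable [DecidableEq C]

/-- `Recolours G S γ δ f`: `γ` can be turned into `δ` by single-vertex recolourings through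
proper `S`-colourings of `G`, recolouring each vertex `x` at most `f x` times. -/
inductive Recolours (G : SimpleGraph V) (S : Finset C) : (V → C) → (V → C) → (V → ℕ) → Prop
  | refl {γ : V → C} (f : V → ℕ) : IsProperColouring G S γ → Recolours G S γ γ f
  | tail {γ δ ε : V → C} {f g : V → ℕ} : Recolours G S γ δ f → IsProperColouring G S ε →
      (∃! x, δ x ≠ ε x) → (∀ x, f x + (if δ x ≠ ε x then 1 else 0) ≤ g x) →
      Recolours G S γ ε g

namespace Recolours

variable {G : SimpleGraph V} {S : Finset C} {γ δ ε : V → C} {f g : V → ℕ}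

theorem mono (h : Recolours G S γ δ f) (hfg : f ≤ g) : Recolours G S γ δ g := by
  induction h generalizing g with
  | refl _ hγ => exact refl g hγ
  | tail _ hε hstep hcount _ => exact tail ‹_› hε hstep fun x => (hcount x).trans (hfg x)

theorem trans (h₁ : Recolours G S γ δ f) (h₂ : Recolours G S δ ε g) :
    Recolours G S γ ε (f + g) := by
  induction h₂ with
  | refl _ _ => exact h₁.mono le_self_add
  | tail _ hε hstep hcount ih =>
    exact tail ih hε hstep fun x => by have := hcount x; simp only [Pi.add_apply]; omega

theorem exists_seq (h : Recolours G S γ δ f) :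
    ∃ (m : ℕ) (c : ℕ → V → C), c 0 = γ ∧ c m = δ ∧
      (∀ i ≤ m, IsProperColouring G S (c i)) ∧
      (∀ i < m, ∃! x, c i x ≠ c (i + 1) x) ∧
      ∀ x, #{i ∈ range m | c i x ≠ c (i + 1) x} ≤ f x := by
  induction h with
  | refl _ hγ => exact ⟨0, fun _ => _, rfl, rfl, fun _ _ => hγ, by simp, by simp⟩
  | @tail δ ε f g _ hε hstep hcount ih =>
    obtain ⟨m, c, h0, hm, hproper, hsteps, hcounts⟩ := ih
    have hc : ∀ i ≤ m, Function.update c (m + 1) ε i = c i := fun i hi =>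
      Function.update_of_ne (by omega) _ _
    refine ⟨m + 1, Function.update c (m + 1) ε, by rw [hc 0 (Nat.zero_le _), h0],
      Function.update_self .., fun i hi => ?_, fun i hi => ?_, fun x => ?_⟩
    · rcases Nat.lt_or_eq_of_le hi with hi | rfl
      · rw [hc i (by omega)]; exact hproper i (by omega)
      · rw [Function.update_self]; exact hε
    · rcases Nat.lt_or_eq_of_le (Nat.le_of_lt_succ hi) with hi | rfl
      · rw [hc i (by omega), hc (i + 1) hi]; exact hsteps i hi
      · rw [hc i le_rfl, Function.update_self, hm]; exact hstep
    · calc #{i ∈ range (m + 1) | Function.update c (m + 1) ε i x ≠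
              Function.update c (m + 1) ε (i + 1) x}
          = #{i ∈ range m | c i x ≠ c (i + 1) x} + if δ x ≠ ε x then 1 else 0 := by
            rw [card_filter, card_filter, sum_range_succ, hc m le_rfl, Function.update_self, hm]
            congr 1
            exact sum_congr rfl fun i hi => by
              rw [mem_range] at hi; rw [hc i hi.le, hc (i + 1) hi]
        _ ≤ g x := (Nat.add_le_add_right (hcounts x) _).trans (hcount x)

theorem isProperColouring_right (h : Recolours G S γ δ f) : IsProperColouring G S δ := by
  cases h with
  | refl _ hγ => exact hγ
  | tail _ hδ _ _ => exact hδ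

end Recolours

theorem recolours_ite_mem_of_isIndepSet [DecidableEq V] {G : SimpleGraph V} {S : Finset C}
    {γ : V → C} {t : C} {s : Finset V} (hγ : IsProperColouring G S γ) (ht : t ∈ S)
    (hunused : ∀ u, γ u ≠ t) (hs : G.IsIndepSet s) :
    Recolours G S γ (fun u => if u ∈ s then t else γ u) (fun u => if u ∈ s then 1 else 0) := by
  induction s using Finset.induction_on with
  | empty =>
    simp only [notMem_empty, if_false]
    exact .refl _ hγ
  | insert a s ha ih =>
    refine .tail (ih (Set.Pairwise.mono (by simp) hs)) (hγ.ite_mem_of_isIndepSet ht hunused hs)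
      ⟨a, by simp [ha, hunused a], fun y hy => ?_⟩ fun x => ?_
    · by_contra hya
      by_cases hys : y ∈ s <;> simp [hys, hya] at hy
    · by_cases hxa : x = a
      · subst hxa
        simp [ha, hunused x]
      · by_cases hxs : x ∈ s <;> simp [hxs, hxa]

def recolourClass (β γ : V → C) (w : V) (c : C) : V → C :=
  fun z => if β z = β w then c else γ z

theorem recolourClass_same_partition {β γ : V → C} {c : C}
    (hpart : ∀ x y, γ x = γ y ↔ β x = β y) (hunused : ∀ u, γ u ≠ c) (w : V) (x y : V) :
    recolourClass β γ w c x = recolourClass β γ w c y ↔ β x = β y := by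
  unfold recolourClass
  split_ifs with hx hy hy
  · exact iff_of_true rfl (hx.trans hy.symm)
  · exact iff_of_false (hunused y).symm fun h => hy (h.symm.trans hx)
  · exact iff_of_false (hunused x) fun h => hx (h.trans hy)
  · exact hpart x y

section

variable [Fintype V] {G : SimpleGraph V} {S : Finset C} {β γ : V → C}

def recolourBudget (β γ : V → C) (x : V) : ℕ :=
  if γ x = β x then 0 else if γ x ∈ univ.image β then 2 else 1

theorem recolourBudget_le_two (β γ : V → C) (x : V) : recolourBudget β γ x ≤ 2 := by
  unfold recolourBudget
  split_ifs <;> omega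

theorem recolourBudget_recolourClass_of_ne {w x : V} {c : C} (hx : β x ≠ β w) :
    recolourBudget β (recolourClass β γ w c) x = recolourBudget β γ x := by
  simp [recolourBudget, recolourClass, hx]

theorem recolours_recolourClass (hβ : IsProperColouring G S β) (hγ : IsProperColouring G S γ)
    {c : C} (hc : c ∈ S) (hunused : ∀ u, γ u ≠ c) (w : V) :
    Recolours G S γ (recolourClass β γ w c) (fun z => if β z = β w then 1 else 0) := by
  classical
  have hs : G.IsIndepSet (({z | β z = β w} : Finset V) : Set V) := fun u hu v hv _ huv =>
    hβ.1 u v huv ((mem_filter.1 hu).2.trans (mem_filter.1 hv).2.symm)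
  have h := recolours_ite_mem_of_isIndepSet hγ hc hunused hs
  simp only [mem_filter, mem_univ, true_and] at h
  exact h

variable (β) in
def RecoloursCloser (G : SimpleGraph V) (S : Finset C) (γ : V → C) : Prop :=
  ∀ γ', IsProperColouring G S γ' → (∀ x y, γ' x = γ' y ↔ β x = β y) →
    #{x | γ' x ≠ β x} < #{x | γ x ≠ β x} → Recolours G S γ' β (recolourBudget β γ')

theorem recolours_of_unused_target (hβ : IsProperColouring G S β)
    (hγ : IsProperColouring G S γ) (hpart : ∀ x y, γ x = γ y ↔ β x = β y)
    (ih : RecoloursCloser β G S γ) {v : V} (hv : γ v ≠ β v) (hunused : ∀ u, γ u ≠ β v) :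
    Recolours G S γ β (recolourBudget β γ) := by
  have hstep := recolours_recolourClass hβ hγ (hβ.2 v) hunused v
  set γ' := recolourClass β γ v (β v)
  have hcloser : #{x | γ' x ≠ β x} < #{x | γ x ≠ β x} := by
    refine card_lt_card ((ssubset_iff_of_subset fun x hx => ?_).2 ⟨v, ?_, ?_⟩)
    · simp only [mem_filter, mem_univ, true_and, γ', recolourClass] at hx ⊢
      split_ifs at hx with h
      exacts [absurd h.symm hx, hx]
    · simpa using hv
    · simp [γ', recolourClass]
  refine (hstep.trans (ih γ' hstep.isProperColouring_right
    (recolourClass_same_partition hpart hunused v) hcloser)).mono fun x => ?_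
  by_cases hx : β x = β v
  · have hγx : γ x ≠ β x := by rwa [(hpart x v).2 hx, hx]
    have hγ'x : γ' x = β x := by simp [γ', recolourClass, hx]
    simp only [Pi.add_apply, recolourBudget, hγ'x, if_pos hx, if_neg hγx]
    split_ifs <;> omega
  · simp only [Pi.add_apply, if_neg hx, zero_add, γ', recolourBudget_recolourClass_of_ne hx,
      le_refl]

theorem recolours_of_spare_colour (hβ : IsProperColouring G S β)
    (hγ : IsProperColouring G S γ) (hpart : ∀ x y, γ x = γ y ↔ β x = β y)
    (ih : RecoloursCloser β G S γ) {t : C} (ht : t ∈ S) (htγ : ∀ u, γ u ≠ t)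
    (htβ : ∀ u, β u ≠ t) {u v : V} (hu : γ u ≠ β u) (huv : γ u = β v) :
    Recolours G S γ β (recolourBudget β γ) := by
  have hstep := recolours_recolourClass hβ hγ ht htγ u
  set γ' := recolourClass β γ u t
  have hvu : β v ≠ β u := fun h => hu (huv.trans h)
  have hv' : γ' v ≠ β v := by
    simp only [γ', recolourClass, if_neg hvu]
    exact fun h => hvu ((hpart v u).1 (h.trans huv.symm))
  have hunused' : ∀ z, γ' z ≠ β v := by
    intro z
    simp only [γ', recolourClass]
    split_ifs with hz
    exacts [fun h => htβ v h.symm, fun h => hz ((hpart z u).1 (h.trans huv.symm))]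
  have hsub : ({x | γ' x ≠ β x} : Finset V) ⊆ ({x | γ x ≠ β x} : Finset V) := by
    intro x hx
    simp only [mem_filter, mem_univ, true_and, γ', recolourClass] at hx ⊢
    split_ifs at hx with h
    · rwa [(hpart x u).2 h, h]
    · exact hx
  have ih' : RecoloursCloser β G S γ' := fun γ'' h₁ h₂ hlt =>
    ih γ'' h₁ h₂ (hlt.trans_le (card_le_card hsub))
  refine (hstep.trans (recolours_of_unused_target hβ hstep.isProperColouring_right
    (recolourClass_same_partition hpart htγ u) ih' hv' hunused')).mono fun x => ?_
  by_cases hx : β x = β u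
  · have hγx : γ x ≠ β x := by rwa [(hpart x u).2 hx, hx]
    have hγ'x : γ' x = t := by simp [γ', recolourClass, hx]
    have htarget : γ x ∈ univ.image β :=
      mem_image.2 ⟨v, mem_univ v, (((hpart x u).2 hx).trans huv).symm⟩
    have hspare : t ∉ univ.image β := by simpa using htβ
    simp only [Pi.add_apply, recolourBudget, hγ'x, if_pos hx, if_neg hγx, if_neg (htβ x).symm,
      if_pos htarget, if_neg hspare, le_refl]
  · simp only [Pi.add_apply, if_neg hx, zero_add, γ', recolourBudget_recolourClass_of_ne hx,
      le_refl]

theorem recolours_recolourBudget (hβ : IsProperColouring G S β) (hS : #(univ.image β) < #S)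
    (hγ : IsProperColouring G S γ) (hpart : ∀ x y, γ x = γ y ↔ β x = β y) :
    Recolours G S γ β (recolourBudget β γ) := by
  induction hn : #{x | γ x ≠ β x} using Nat.strong_induction_on generalizing γ with
  | _ n ih =>
  have ih' : RecoloursCloser β G S γ := fun γ' hγ' hpart' hlt => ih _ (hn ▸ hlt) hγ' hpart' rfl
  by_cases hdone : γ = β
  · subst hdone
    exact .refl _ hγ
  by_cases hfree : ∃ v, γ v ≠ β v ∧ ∀ u, γ u ≠ β v
  · obtain ⟨v, hv, hunused⟩ := hfree
    exact recolours_of_unused_target hβ hγ hpart ih' hv hunused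
  push Not at hfree
  obtain ⟨v, hv⟩ : ∃ v, γ v ≠ β v := by
    by_contra! h
    exact hdone (funext h)
  obtain ⟨u, huv⟩ := hfree v hv
  have hu : γ u ≠ β u := fun h => hv (((hpart v u).2 (h.symm.trans huv).symm).trans huv)
  obtain ⟨t, ht, htγ⟩ : ∃ t ∈ S, t ∉ univ.image γ := by
    refine exists_mem_notMem_of_card_lt_card ?_
    exact (card_image_le_of_factorsThrough (fun x y => (hpart x y).2) univ).trans_lt hS
  simp only [mem_image, mem_univ, true_and, not_exists] at htγ
  -- `γ` avoids `t`, so a vertex of `β`-colour `t` would be wrong with an unused target.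
  have htβ : ∀ w, β w ≠ t := fun w hw => by
    by_cases hw' : γ w = β w
    · exact htγ w (hw'.trans hw)
    · obtain ⟨u', hu'⟩ := hfree w hw'
      exact htγ u' (hu'.trans hw)
  exact recolours_of_spare_colour hβ hγ hpart ih' ht htγ htβ hu huv

end

end Renaming

/-- Renaming Lemma: if two proper colourings `α` and `β` of a finite graph `G`, with colours
drawn from a set `S`, induce the same partition of the vertices into `k` colour classes and
`|S| > k`, then `α` can be transformed into `β` by single-vertex recolourings through proper
`S`-colourings, recolouring each vertex at most 2 times. -/
theorem stmt5 {V C : Type} [Fintype V] [DecidableEq C] (G : SimpleGraph V)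
    (S : Finset C) (k : ℕ) (α β : V → C)
    (hαp : ∀ u v, G.Adj u v → α u ≠ α v) (hβp : ∀ u v, G.Adj u v → β u ≠ β v)
    (hαS : ∀ v, α v ∈ S) (hβS : ∀ v, β v ∈ S)
    (hpart : ∀ x y, α x = α y ↔ β x = β y)
    (hk : (Finset.univ.image α).card = k)
    (hS : k < S.card) :
    ∃ (m : ℕ) (c : ℕ → V → C),
      c 0 = α ∧ c m = β ∧
      (∀ i ≤ m, (∀ u v, G.Adj u v → c i u ≠ c i v) ∧ ∀ v, c i v ∈ S) ∧
      (∀ i < m, ∃! x, c i x ≠ c (i + 1) x) ∧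
      ∀ x, ((Finset.range m).filter (fun i => c i x ≠ c (i + 1) x)).card ≤ 2 := by
  have hcard : (Finset.univ.image β).card < S.card :=
    (Renaming.card_image_le_of_factorsThrough (fun x y => (hpart x y).1) _).trans_lt (hk ▸ hS)
  have hrecolours := Renaming.recolours_recolourBudget ⟨hβp, hβS⟩ hcard ⟨hαp, hαS⟩ hpart
  exact (hrecolours.mono (g := fun _ => 2) (Renaming.recolourBudget_le_two β α)).exists_seq
end

section
/- For any set S of colours with |S| > k and any two proper S-colourings of the complete graph K_k that are both injective, one can be transformed into the other by recolouring each vertex at most twice, with every intermediate colouring proper (injective on K_k) and using colours from S. -/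
/-!
Let `β` be the target colouring. While some vertex `u` with `γ u ≠ β u` finds its target colour
`β u` free, move it there. Otherwise every such target colour is occupied; since `|S| > k` some
colour `f ∈ S` is free, and it is then no `β`-colour at all. Park the vertex `w` occupying `β u`
on `f` and move `u` to `β u`. A parked vertex sits on a colour nobody wants, so it is never parked
again and moves only once more, to its target. Each round strictly lowers the remaining budgets
(0 for a vertex already right, 2 for one on a wanted colour, 1 otherwise), which terminates the
process and bounds the moves of every vertex by two.
-/

open Function

variable {V C : Type*}

theorem injective_update_of_forall_ne [DecidableEq V] {γ : V → C} (hγ : Injective γ) {v : V}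
    {a : C} (ha : ∀ w, γ w ≠ a) : Injective (update γ v a) := by
  intro x y h
  by_cases hx : x = v <;> by_cases hy : y = v
  · rw [hx, hy]
  · subst hx; rw [update_self, update_of_ne hy] at h; exact absurd h.symm (ha y)
  · subst hy; rw [update_self, update_of_ne hx] at h; exact absurd h (ha x)
  · rw [update_of_ne hx, update_of_ne hy] at h; exact hγ h

theorem update_mem_of_forall_mem [DecidableEq V] {S : Finset C} {γ : V → C} (hγS : ∀ v, γ v ∈ S)
    {v : V} {a : C} (ha : a ∈ S) (x : V) : update γ v a x ∈ S := by
  rcases eq_or_ne x v with rfl | hx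
  · simpa using ha
  · simpa [update_of_ne hx] using hγS x

variable [DecidableEq C]

def Reconfigurable (S : Finset C) (b : V → ℕ) (γ β : V → C) : Prop :=
  ∃ (m : ℕ) (c : ℕ → V → C), c 0 = γ ∧ c m = β ∧
    (∀ i ≤ m, Injective (c i) ∧ ∀ v, c i v ∈ S) ∧
    (∀ i < m, ∃! x, c i x ≠ c (i + 1) x) ∧
    ∀ x, ((Finset.range m).filter (fun i => c i x ≠ c (i + 1) x)).card ≤ b x

namespace Reconfigurable

variable {S : Finset C} {b b' : V → ℕ} {γ β : V → C}

theorem refl (hγ : Injective γ) (hγS : ∀ v, γ v ∈ S) (b : V → ℕ) : Reconfigurable S b γ γ :=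
  ⟨0, fun _ => γ, rfl, rfl, fun _ _ => ⟨hγ, hγS⟩, fun _ h => absurd h (Nat.not_lt_zero _),
    fun _ => by simp⟩

theorem mono (h : Reconfigurable S b γ β) (hb : b ≤ b') : Reconfigurable S b' γ β := by
  obtain ⟨m, c, h0, hm, hc, hstep, hcount⟩ := h
  exact ⟨m, c, h0, hm, hc, hstep, fun x => (hcount x).trans (hb x)⟩

theorem cons [DecidableEq V] {v : V} {a : C} (hγ : Injective γ) (hγS : ∀ v, γ v ∈ S)
    (ha : a ≠ γ v) (h : Reconfigurable S b (update γ v a) β) :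
    Reconfigurable S (b + Pi.single v 1) γ β := by
  obtain ⟨m, c, h0, hm, hc, hstep, hcount⟩ := h
  refine ⟨m + 1, fun | 0 => γ | i + 1 => c i, rfl, hm, ?_, ?_, fun x => ?_⟩
  · rintro (_ | i) hi
    exacts [⟨hγ, hγS⟩, hc i (by omega)]
  · rintro (_ | i) hi
    · refine ⟨v, by simpa [h0] using ha.symm, fun y hy => by_contra fun hyv => hy ?_⟩
      simp [h0, update_of_ne hyv]
    · exact hstep i (by omega)
  · rw [Finset.card_filter, Finset.sum_range_succ', ← Finset.card_filter]
    have hfirst : (if γ x ≠ c 0 x then 1 else 0) ≤ (Pi.single v 1 : V → ℕ) x := by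
      rcases eq_or_ne x v with rfl | hx
      · simp only [Pi.single_eq_same]; split_ifs <;> omega
      · simp [h0, update_of_ne hx]
    exact Nat.add_le_add (hcount x) hfirst

end Reconfigurable

open Classical in
noncomputable def recolourBudget (β γ : V → C) (x : V) : ℕ :=
  if γ x = β x then 0 else if γ x ∈ Set.range β then 2 else 1

section recolourBudget

variable {β γ : V → C}

theorem recolourBudget_le_two (x : V) : recolourBudget β γ x ≤ 2 := by
  unfold recolourBudget; split_ifs <;> omega

theorem one_le_recolourBudget {x : V} (hx : γ x ≠ β x) : 1 ≤ recolourBudget β γ x := by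
  simp only [recolourBudget, hx, if_false]; split_ifs <;> omega

theorem recolourBudget_update_of_ne [DecidableEq V] {x v : V} {a : C} (hx : x ≠ v) :
    recolourBudget β (update γ v a) x = recolourBudget β γ x := by
  rw [recolourBudget, recolourBudget, update_of_ne hx]

variable [DecidableEq V] {u w : V} {f : C}

theorem recolourBudget_settle_add_le (hu : γ u ≠ β u) :
    recolourBudget β (update γ u (β u)) + Pi.single u 1 ≤ recolourBudget β γ := by
  intro x
  rcases eq_or_ne x u with rfl | hx
  · simpa [recolourBudget] using one_le_recolourBudget hu
  · simp [hx, recolourBudget_update_of_ne hx]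

theorem recolourBudget_park_settle_add_le (hβ : Injective β) (hw : γ w = β u)
    (hu : γ u ≠ β u) (hf : f ∉ Set.range β) :
    recolourBudget β (update (update γ w f) u (β u)) + Pi.single u 1 + Pi.single w 1
      ≤ recolourBudget β γ := by
  have hwu : w ≠ u := by rintro rfl; exact hu hw
  intro x
  rcases eq_or_ne x u with rfl | hxu
  · simpa [recolourBudget, hwu.symm] using one_le_recolourBudget hu
  rcases eq_or_ne x w with rfl | hxw
  · have hfβ : f ≠ β x := fun h => hf ⟨x, h.symm⟩
    have hβux : β u ≠ β x := fun h => hwu (hβ h.symm)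
    simp [recolourBudget, hxu, hfβ, hf, hw, hβux]
  · simp [recolourBudget_update_of_ne, *]

end recolourBudget

theorem exists_mem_forall_ne_of_card_lt [Fintype V] {S : Finset C} (hS : Fintype.card V < S.card)
    (γ : V → C) : ∃ f ∈ S, ∀ v, γ v ≠ f := by
  obtain ⟨f, hfS, hf⟩ := Finset.exists_mem_notMem_of_card_lt_card
    (s := Finset.univ.image γ) (Finset.card_image_le.trans_lt hS)
  exact ⟨f, hfS, fun v hv => hf (Finset.mem_image.2 ⟨v, Finset.mem_univ v, hv⟩)⟩

variable [Fintype V] [DecidableEq V] {S : Finset C} {β : V → C}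

theorem exists_reconfigurable_step (hS : Fintype.card V < S.card) (hβ : Injective β)
    (hβS : ∀ v, β v ∈ S) {γ : V → C} (hγ : Injective γ) (hγS : ∀ v, γ v ∈ S) (hγβ : γ ≠ β) :
    ∃ γ', Injective γ' ∧ (∀ v, γ' v ∈ S) ∧ recolourBudget β γ' < recolourBudget β γ ∧
      (Reconfigurable S (recolourBudget β γ') γ' β →
        Reconfigurable S (recolourBudget β γ) γ β) := by
  by_cases hfree : ∃ u, γ u ≠ β u ∧ ∀ w, γ w ≠ β u
  · obtain ⟨u, hu, hfree⟩ := hfree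
    have hle := recolourBudget_settle_add_le hu
    refine ⟨update γ u (β u), injective_update_of_forall_ne hγ hfree,
      update_mem_of_forall_mem hγS (hβS u), ?_, fun h => (h.cons hγ hγS (Ne.symm hu)).mono hle⟩
    exact (lt_add_of_pos_right _ (Pi.single_pos.2 Nat.one_pos)).trans_le hle
  have hocc : ∀ u, γ u ≠ β u → ∃ w, γ w = β u := by push Not at hfree; exact hfree
  obtain ⟨u, hu⟩ := Function.ne_iff.1 hγβ
  obtain ⟨w, hw⟩ := hocc u hu
  obtain ⟨f, hfS, hf⟩ := exists_mem_forall_ne_of_card_lt hS γ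
  have hfβ : f ∉ Set.range β := by
    rintro ⟨x, rfl⟩
    by_cases hx : γ x = β x
    · exact hf x hx
    · obtain ⟨y, hy⟩ := hocc x hx
      exact hf y hy
  have hwu : w ≠ u := by rintro rfl; exact hu hw
  set γ₁ := update γ w f
  have hγ₁ : Injective γ₁ := injective_update_of_forall_ne hγ hf
  have hγ₁S : ∀ v, γ₁ v ∈ S := update_mem_of_forall_mem hγS hfS
  have hγ₁u : γ₁ u = γ u := update_of_ne hwu.symm _ _
  have hfree₁ : ∀ y, γ₁ y ≠ β u := by
    intro y hy
    by_cases hyw : y = w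
    · subst hyw; exact hfβ ⟨u, by simpa [γ₁] using hy.symm⟩
    · rw [show γ₁ y = γ y from update_of_ne hyw _ _, ← hw] at hy; exact hyw (hγ hy)
  have hle := recolourBudget_park_settle_add_le hβ hw hu hfβ
  refine ⟨update γ₁ u (β u), injective_update_of_forall_ne hγ₁ hfree₁,
    update_mem_of_forall_mem hγ₁S (hβS u), ?_, fun h => ?_⟩
  · exact (lt_add_of_pos_right _ (Pi.single_pos.2 Nat.one_pos : 0 < Pi.single u 1)).trans_le
      (le_self_add.trans hle)
  · exact ((h.cons hγ₁ hγ₁S (hγ₁u ▸ Ne.symm hu)).cons hγ hγS (hf w).symm).mono hle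

theorem reconfigurable_recolourBudget (hS : Fintype.card V < S.card) (hβ : Injective β)
    (hβS : ∀ v, β v ∈ S) (γ : V → C) (hγ : Injective γ) (hγS : ∀ v, γ v ∈ S) :
    Reconfigurable S (recolourBudget β γ) γ β := by
  induction hb : recolourBudget β γ using WellFoundedLT.induction generalizing γ with
  | _ b ih =>
    subst hb
    by_cases hγβ : γ = β
    · subst hγβ
      exact .refl hγ hγS _
    obtain ⟨γ', hγ', hγ'S, hlt, hstep⟩ := exists_reconfigurable_step hS hβ hβS hγ hγS hγβ
    exact hstep (ih _ hlt γ' hγ' hγ'S rfl)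

/-- For a set `S` of colours with `|S| > k`, any two injective `S`-colourings of the complete
graph `K_k` can be transformed into one another by single-vertex recolourings, every
intermediate colouring being injective with colours in `S`, recolouring each vertex at most
twice. -/
theorem stmt6 {C : Type} [DecidableEq C] (k : ℕ) (S : Finset C) (hS : k < S.card)
    (α β : Fin k → C) (hα : Function.Injective α) (hβ : Function.Injective β)
    (hαS : ∀ v, α v ∈ S) (hβS : ∀ v, β v ∈ S) :
    ∃ (m : ℕ) (c : ℕ → Fin k → C),
      c 0 = α ∧ c m = β ∧
      (∀ i ≤ m, Function.Injective (c i) ∧ ∀ v, c i v ∈ S) ∧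
      (∀ i < m, ∃! x, c i x ≠ c (i + 1) x) ∧
      ∀ x, ((Finset.range m).filter (fun i => c i x ≠ c (i + 1) x)).card ≤ 2 :=
  (reconfigurable_recolourBudget (by simpa using hS) hβ hβS α hα hαS).mono
    fun x => recolourBudget_le_two x
end
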